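/- arXiv:1107.2455 — 2 statements merged into one kernel-verified Lean document; each statement's English description precedes it below -/
import Mathlib

section
/- Let B be an open ball in ℝ³, let y₀ ∈ closure(B), and let δ > 0. Then liminf_{τ→∞} τ³ ∫_{B ∩ B_δ(y₀)} e^{−τ|y−y₀|} dy > 0, where the integral is with respect to Lebesgue measure and B_δ(y₀) is the open ball of radius δ centered at y₀. -/
open MeasureTheory Metric Filter Module Real

/-!
Put `t = τ⁻¹`. The point a fraction `t / r` of the way from `y₀` to the centre `x₀` is the
centre of a ball of radius `t` which, once `τ` is large, lies in `B ∩ B_δ(y₀)` and within `2t`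
of `y₀`. On it the integrand is at least `e⁻²`, and its volume is `t ^ n` times that of the unit
ball, so the integral is at least a constant multiple of `τ ^ (-n)`.
-/

lemma exists_dist_le_and_ball_subset_ball {E : Type*} [NormedAddCommGroup E] [NormedSpace ℝ E]
    {x₀ y₀ : E} {r t : ℝ} (hy₀ : y₀ ∈ closedBall x₀ r) (ht : 0 < t) (htr : t ≤ r) :
    ∃ z, dist z y₀ ≤ t ∧ ball z t ⊆ ball x₀ r := by
  rw [mem_closedBall] at hy₀
  have hr : 0 < r := ht.trans_le htr
  have hc : t / r ≤ 1 := (div_le_one hr).mpr htr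
  refine ⟨AffineMap.lineMap y₀ x₀ (t / r), ?_, ball_subset_ball' ?_⟩
  · rw [dist_lineMap_left, Real.norm_of_nonneg (by positivity)]
    calc t / r * dist y₀ x₀ ≤ t / r * r := by gcongr
      _ = t := div_mul_cancel₀ t hr.ne'
  · rw [dist_lineMap_right, Real.norm_of_nonneg (by linarith)]
    calc t + (1 - t / r) * dist y₀ x₀ ≤ t + (1 - t / r) * r := by gcongr
      _ = r := by field_simp; ring

lemma mul_measureReal_le_setIntegral {X : Type*} [MeasurableSpace X] {μ : Measure X}
    {f : X → ℝ} {s u : Set X} {c : ℝ} (hf : IntegrableOn f s μ) (hf₀ : 0 ≤ f)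
    (hu : MeasurableSet u) (hus : u ⊆ s) (hμu : μ u ≠ ⊤) (hc : ∀ x ∈ u, c ≤ f x) :
    c * μ.real u ≤ ∫ x in s, f x ∂μ :=
  calc c * μ.real u ≤ ∫ x in u, f x ∂μ :=
        setIntegral_ge_of_const_le_real hu hμu hc (hf.mono_set hus)
    _ ≤ ∫ x in s, f x ∂μ :=
        setIntegral_mono_set hf (Eventually.of_forall hf₀) hus.eventuallyLE

variable {E : Type*} [NormedAddCommGroup E] [NormedSpace ℝ E] [FiniteDimensional ℝ E]
  [MeasurableSpace E] [BorelSpace E] (μ : Measure E) [μ.IsAddHaarMeasure]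

lemma measureReal_ball_eq_pow_mul (z : E) {t : ℝ} (ht : 0 < t) :
    μ.real (ball z t) = t ^ finrank ℝ E * μ.real (ball 0 1) := by
  rw [measureReal_def, Measure.addHaar_ball_of_pos μ z ht, ENNReal.toReal_mul,
    ENNReal.toReal_ofReal (by positivity), measureReal_def]

lemma integrableOn_exp_neg_mul_dist_ball (x₀ y₀ : E) (r : ℝ) {τ : ℝ} (hτ : 0 ≤ τ) :
    IntegrableOn (fun y => exp (-τ * dist y y₀)) (ball x₀ r) μ := by
  refine Measure.integrableOn_of_bounded (M := 1) measure_ball_lt_top.ne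
    (by fun_prop : Continuous fun y => exp (-τ * dist y y₀)).aestronglyMeasurable
    (Eventually.of_forall fun y => ?_)
  rw [Real.norm_of_nonneg (exp_nonneg _), exp_le_one_iff]
  nlinarith [dist_nonneg (x := y) (y := y₀)]

theorem eventually_le_pow_finrank_mul_setIntegral_exp_neg_mul_dist {x₀ y₀ : E} {r δ : ℝ}
    (hr : 0 < r) (hy₀ : y₀ ∈ closedBall x₀ r) (hδ : 0 < δ) :
    ∀ᶠ τ : ℝ in atTop, exp (-2) * μ.real (ball 0 1) ≤
      τ ^ finrank ℝ E * ∫ y in ball x₀ r ∩ ball y₀ δ, exp (-τ * dist y y₀) ∂μ := by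
  filter_upwards [eventually_gt_atTop 0, eventually_ge_atTop r⁻¹, eventually_ge_atTop (2 / δ)]
    with τ hτ hτr hτδ
  set t := τ⁻¹ with ht_def
  have ht : 0 < t := inv_pos.mpr hτ
  have htr : t ≤ r := inv_le_of_inv_le₀ hr hτr
  have htδ : 2 * t ≤ δ := by
    rw [div_le_iff₀ hδ] at hτδ
    rw [ht_def, ← div_eq_mul_inv, div_le_iff₀ hτ]
    linarith
  obtain ⟨z, hzy₀, hzB⟩ := exists_dist_le_and_ball_subset_ball hy₀ ht htr
  have hsub : ball z t ⊆ ball x₀ r ∩ ball y₀ δ :=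
    Set.subset_inter hzB (ball_subset_ball' (by linarith))
  have hlow : ∀ y ∈ ball z t, exp (-2) ≤ exp (-τ * dist y y₀) := fun y hy => by
    have hy : dist y y₀ < 2 * t := by
      linarith [dist_triangle y z y₀, mem_ball.mp hy]
    have hτy : τ * dist y y₀ ≤ 2 := by
      calc τ * dist y y₀ ≤ τ * (2 * t) := by gcongr
        _ = 2 := by rw [ht_def]; field_simp
    exact exp_le_exp.mpr (by linarith)
  calc exp (-2) * μ.real (ball 0 1) = τ ^ finrank ℝ E * (exp (-2) * μ.real (ball z t)) := by
        rw [measureReal_ball_eq_pow_mul μ z ht, ht_def, inv_pow]; field_simp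
    _ ≤ τ ^ finrank ℝ E * ∫ y in ball x₀ r ∩ ball y₀ δ, exp (-τ * dist y y₀) ∂μ := by
        gcongr
        exact mul_measureReal_le_setIntegral
          ((integrableOn_exp_neg_mul_dist_ball μ x₀ y₀ r hτ.le).mono_set Set.inter_subset_left)
          (fun _ => exp_nonneg _) measurableSet_ball hsub measure_ball_lt_top.ne hlow

/-- Claim 3 of Lemma 2.2: the localized Laplace-type integral over an open ball
decays no faster than `τ⁻³`, i.e. `liminf_{τ→∞} τ³ ∫_{B ∩ B_δ(y₀)} e^{-τ|y-y₀|} dy > 0`. -/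
theorem laplace_integral_ball_lower_bound
    (x₀ : EuclideanSpace ℝ (Fin 3)) (r : ℝ) (hr : 0 < r)
    (y₀ : EuclideanSpace ℝ (Fin 3)) (hy₀ : y₀ ∈ closure (Metric.ball x₀ r))
    (δ : ℝ) (hδ : 0 < δ) :
    ∃ c : ℝ, 0 < c ∧ ∀ᶠ τ : ℝ in atTop,
      c ≤ τ ^ 3 * ∫ y in Metric.ball x₀ r ∩ Metric.ball y₀ δ,
            Real.exp (-τ * dist y y₀) := by
  rw [closure_ball x₀ hr.ne'] at hy₀
  have hball : 0 < volume.real (ball (0 : EuclideanSpace ℝ (Fin 3)) 1) :=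
    ENNReal.toReal_pos (measure_ball_pos volume 0 one_pos).ne' measure_ball_lt_top.ne
  refine ⟨exp (-2) * volume.real (ball (0 : EuclideanSpace ℝ (Fin 3)) 1), by positivity, ?_⟩
  simpa only [finrank_euclideanSpace_fin] using
    eventually_le_pow_finrank_mul_setIntegral_exp_neg_mul_dist volume hr hy₀ hδ
end

section
/- Let Ω be a bounded open subset of ℝ³, let D be a nonempty open set with closure(D) ⊂ Ω, and let B be a nonempty bounded open set with closure(B) ∩ closure(Ω) = ∅. Then inf{ |x−y| + |y−z| : x ∈ ∂B, y ∈ ∂D, z ∈ ∂Ω } ≤ 2·dist(D,B) − dist(Ω,B), where dist(E,F) = inf{|x−y| : x ∈ E, y ∈ F} and ∂E denotes the topological boundary of E. -/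
/-!
Take `x₀ ∈ D` and `y₀ ∈ B` with `|x₀ - y₀|` close to `dist(D, B)`. The segment `[x₀, y₀]` leaves
`D` and enters `B`, so it contains points `y ∈ ∂D` and `x ∈ ∂B` with `|x - y| ≤ |x₀ - y₀|`.
Since `y ∈ Ω` and `x ∉ Ω`, the segment `[y, x]` crosses `∂Ω` at some `z`, and then
`|x - y| + |y - z| = 2|x - y| - |z - x| ≤ 2 dist(D, B) - dist(Ω, B)` up to `ε`.
-/

noncomputable def setDist (A C : Set (EuclideanSpace ℝ (Fin 3))) : ℝ :=
  sInf {d | ∃ x ∈ A, ∃ y ∈ C, d = dist x y}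

open Set

theorem IsPreconnected.inter_frontier_nonempty {X : Type*} [TopologicalSpace X] {s t : Set X}
    (hs : IsPreconnected s) (hst : (s ∩ t).Nonempty) (hst' : (s \ t).Nonempty) :
    (s ∩ frontier t).Nonempty := by
  rw [frontier_eq_closure_inter_closure]
  refine isPreconnected_closed_iff.1 hs _ _ isClosed_closure isClosed_closure ?_
    (hst.mono (inter_subset_inter_right _ subset_closure))
    (hst'.mono (inter_subset_inter_right _ subset_closure))
  rw [← closure_union, union_compl_self, closure_univ]
  exact subset_univ s

section Segment

variable {E : Type*} [AddCommGroup E] [Module ℝ E] [TopologicalSpace E]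
  [IsTopologicalAddGroup E] [ContinuousSMul ℝ E]

theorem exists_mem_segment_mem_frontier {s : Set E} {a b : E} (ha : a ∈ s) (hb : b ∉ s) :
    ∃ z ∈ segment ℝ a b, z ∈ frontier s :=
  (convex_segment a b).isPreconnected.inter_frontier_nonempty
    ⟨a, left_mem_segment ℝ a b, ha⟩ ⟨b, right_mem_segment ℝ a b, hb⟩

end Segment

theorem dist_le_of_mem_segment {E : Type*} [SeminormedAddCommGroup E] [NormedSpace ℝ E]
    {a b x y : E} (hx : x ∈ segment ℝ a b) (hy : y ∈ segment ℝ a b) : dist x y ≤ dist a b := by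
  rw [← convexHull_pair] at hx hy
  calc dist x y ≤ Metric.diam (convexHull ℝ {a, b}) :=
        Metric.dist_le_diam_of_mem (isBounded_convexHull.2 (toFinite _).isBounded) hx hy
    _ = dist a b := by rw [convexHull_diam, Metric.diam_pair]

section SetDist

variable {A C : Set (EuclideanSpace ℝ (Fin 3))}

theorem setDist_bddBelow : BddBelow {d | ∃ x ∈ A, ∃ y ∈ C, d = dist x y} :=
  ⟨0, by rintro _ ⟨x, -, y, -, rfl⟩; exact dist_nonneg⟩

theorem exists_dist_lt_setDist_add (hA : A.Nonempty) (hC : C.Nonempty) {ε : ℝ} (hε : 0 < ε) :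
    ∃ x ∈ A, ∃ y ∈ C, dist x y < setDist A C + ε := by
  obtain ⟨x, hx⟩ := hA
  obtain ⟨y, hy⟩ := hC
  have hne : {d | ∃ x ∈ A, ∃ y ∈ C, d = dist x y}.Nonempty := ⟨dist x y, x, hx, y, hy, rfl⟩
  obtain ⟨_, ⟨x', hx', y', hy', rfl⟩, hlt⟩ := Real.lt_sInf_add_pos hne hε
  exact ⟨x', hx', y', hy', hlt⟩

theorem setDist_le_dist_of_mem_closure {x y : EuclideanSpace ℝ (Fin 3)} (hx : x ∈ closure A)
    (hy : y ∈ closure C) : setDist A C ≤ dist x y := by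
  refine le_of_forall_pos_le_add fun ε hε => ?_
  obtain ⟨x', hx', hxx'⟩ := Metric.mem_closure_iff.1 hx (ε / 2) (half_pos hε)
  obtain ⟨y', hy', hyy'⟩ := Metric.mem_closure_iff.1 hy (ε / 2) (half_pos hε)
  have hle : setDist A C ≤ dist x' y' := csInf_le setDist_bddBelow ⟨x', hx', y', hy', rfl⟩
  linarith [dist_triangle4 x' x y y', dist_comm x x']

end SetDist

theorem boundary_path_length_bound_general
    (Ω D B : Set (EuclideanSpace ℝ (Fin 3)))
    (hDne : D.Nonempty) (hDΩ : closure D ⊆ Ω)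
    (hBne : B.Nonempty)
    (hBΩ : closure B ∩ closure Ω = ∅) :
    sInf {l | ∃ x ∈ frontier B, ∃ y ∈ frontier D, ∃ z ∈ frontier Ω,
        l = dist x y + dist y z}
      ≤ 2 * setDist D B - setDist Ω B := by
  have hB_out : ∀ a ∈ closure B, a ∉ Ω := fun a haB haΩ =>
    hBΩ.subset ⟨haB, subset_closure haΩ⟩
  refine le_of_forall_pos_le_add fun ε hε => ?_
  obtain ⟨x₀, hx₀, y₀, hy₀, hlt⟩ := exists_dist_lt_setDist_add hDne hBne (half_pos hε)
  obtain ⟨y, hy_seg, hy⟩ := exists_mem_segment_mem_frontier hx₀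
    fun h => hB_out y₀ (subset_closure hy₀) (hDΩ (subset_closure h))
  obtain ⟨x, hx_seg, hx⟩ := exists_mem_segment_mem_frontier hy₀
    fun h => hB_out x₀ (subset_closure h) (hDΩ (subset_closure hx₀))
  rw [segment_symm] at hx_seg
  obtain ⟨z, hz_seg, hz⟩ := exists_mem_segment_mem_frontier (hDΩ hy.1) (hB_out x hx.1)
  have hbdd : BddBelow {l | ∃ x ∈ frontier B, ∃ y ∈ frontier D, ∃ z ∈ frontier Ω,
      l = dist x y + dist y z} :=
    ⟨0, by rintro _ ⟨x, -, y, -, z, -, rfl⟩; positivity⟩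
  calc _ ≤ dist x y + dist y z := csInf_le hbdd ⟨x, hx, y, hy, z, hz, rfl⟩
    _ = 2 * dist x y - dist z x := by
      linarith [dist_add_dist_of_mem_segment hz_seg, dist_comm x y]
    _ ≤ 2 * setDist D B - setDist Ω B + ε := by
      linarith [dist_le_of_mem_segment hx_seg hy_seg, setDist_le_dist_of_mem_closure hz.1 hx.1]

theorem boundary_path_length_bound
    (Ω D B : Set (EuclideanSpace ℝ (Fin 3)))
    (hΩopen : IsOpen Ω) (hΩbdd : Bornology.IsBounded Ω)
    (hDopen : IsOpen D) (hDne : D.Nonempty) (hDΩ : closure D ⊆ Ω)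
    (hBopen : IsOpen B) (hBne : B.Nonempty) (hBbdd : Bornology.IsBounded B)
    (hBΩ : closure B ∩ closure Ω = ∅) :
    sInf {l | ∃ x ∈ frontier B, ∃ y ∈ frontier D, ∃ z ∈ frontier Ω,
        l = dist x y + dist y z}
      ≤ 2 * setDist D B - setDist Ω B :=
  boundary_path_length_bound_general Ω D B hDne hDΩ hBne hBΩ
end
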